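/- arXiv:2304.13165 — 5 statements merged into one kernel-verified Lean document; each statement's English description precedes it below -/
import Mathlib

section
/- Let (Σ, 𝔅, μ) be a σ-finite measure space and let E : L²(Σ, μ) → (−∞, +∞] be a proper, lower semicontinuous, convex functional satisfying (H2*): E(u + T∘(û − u)) + E(û − T∘(û − u)) ≤ E(u) + E(û) for all u, û ∈ L² and all T ∈ P₀. Then the part A = ∂E ∩ (L^{1∩∞} × L^{1∩∞}) of the subgradient ∂E is completely accretive, i.e. for all (u, v), (û, v̂) ∈ A, all λ > 0 and all j ∈ J₀ one has ∫_Σ j(u − û) dμ ≤ ∫_Σ j(u − û + λ(v − v̂)) dμ. -/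
open MeasureTheory Filter Topology
open scoped ENNReal

noncomputable section

/-- The restricted signum function `sign₀ : ℝ → {−1, 0, 1}`. -/
def sign0 (s : ℝ) : ℝ := if 0 < s then 1 else if s < 0 then -1 else 0

/-- Membership in the class `J₀` of convex, lower semicontinuous functions
`j : ℝ → [0, +∞]` with `j 0 = 0`. -/
def MemJ0 (j : ℝ → ℝ≥0∞) : Prop :=
  LowerSemicontinuous j ∧ j 0 = 0 ∧
    ∀ a b t : ℝ, 0 ≤ t → t ≤ 1 →
      j (t * a + (1 - t) * b) ≤ ENNReal.ofReal t * j a + ENNReal.ofReal (1 - t) * j b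

/-- The Yosida operator `[φ⁻¹]_λ = λ⁻¹ (I − (I + λ φ⁻¹)⁻¹)` of the inverse
function `φ⁻¹` of `φ : ℝ → ℝ`, as a real function applied pointwise. -/
def yosida (φ : ℝ → ℝ) (lam : ℝ) (r : ℝ) : ℝ :=
  (r - Function.invFun (fun s : ℝ => s + lam * Function.invFun φ s) r) / lam

variable {Ω : Type*} [MeasurableSpace Ω]

/-- The subgradient `∂E ⊆ L² × L²` of `E : L² → (−∞, +∞]` as a graph:
`(u, h) ∈ ∂E` iff `E u < ∞` and `⟨h, v − u⟩_{L²} + E u ≤ E v` for all `v ∈ L²`. -/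
def SubGrad (μ : Measure Ω) (E : Lp ℝ 2 μ → WithTop ℝ) :
    Set (Lp ℝ 2 μ × Lp ℝ 2 μ) :=
  {p | E p.1 < ⊤ ∧ ∀ v : Lp ℝ 2 μ,
    ((∫ x, p.2 x * (v x - p.1 x) ∂μ : ℝ) : WithTop ℝ) + E p.1 ≤ E v}

/-- The part `A = (∂E)|_{L^{1∩∞}} = ∂E ∩ (L^{1∩∞} × L^{1∩∞})` of the
subgradient `∂E` in `L¹ ∩ L^∞`. -/
def PartA (μ : Measure Ω) (E : Lp ℝ 2 μ → WithTop ℝ) :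
    Set (Lp ℝ 2 μ × Lp ℝ 2 μ) :=
  {p ∈ SubGrad μ E | MemLp (p.1 : Ω → ℝ) 1 μ ∧ MemLp (p.1 : Ω → ℝ) ⊤ μ ∧
    MemLp (p.2 : Ω → ℝ) 1 μ ∧ MemLp (p.2 : Ω → ℝ) ⊤ μ}

/-- The doubly nonlinear graph `Aφ ⊆ L¹ × L¹`:
`(u, v) ∈ Aφ` iff `φ∘u ∈ D(A)` and `v ∈ A(φ∘u)` where `A = (∂E)|_{L^{1∩∞}}`. -/
def APhi (μ : Measure Ω) (E : Lp ℝ 2 μ → WithTop ℝ) (φ : ℝ → ℝ) :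
    Set (Lp ℝ 1 μ × Lp ℝ 1 μ) :=
  {p | ∃ U V : Lp ℝ 2 μ,
    (U : Ω → ℝ) =ᵐ[μ] (fun x => φ (p.1 x)) ∧
    (V : Ω → ℝ) =ᵐ[μ] (p.2 : Ω → ℝ) ∧ (U, V) ∈ PartA μ E}

/-- The effective domain `D(Eφ) = {u ∈ L^{1∩∞} : φ∘u ∈ D(E)}`, as a subset
of `L¹`. -/
def DEPhi (μ : Measure Ω) (E : Lp ℝ 2 μ → WithTop ℝ) (φ : ℝ → ℝ) :
    Set (Lp ℝ 1 μ) :=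
  {u | MemLp (u : Ω → ℝ) ⊤ μ ∧
    ∃ U : Lp ℝ 2 μ, (U : Ω → ℝ) =ᵐ[μ] (fun x => φ (u x)) ∧ E U < ⊤}


/-- Membership in the class `P₀` of continuously differentiable functions
`T : ℝ → ℝ` with `T 0 = 0`, `0 ≤ T′ ≤ 1`, and `T′` of compact support. -/
def MemP0 (T : ℝ → ℝ) : Prop :=
  ContDiff ℝ 1 T ∧ T 0 = 0 ∧ (∀ r : ℝ, 0 ≤ deriv T r ∧ deriv T r ≤ 1) ∧
    HasCompactSupport (deriv T)

/-!
(H2*) for the pair `(û, u)`, added to the subgradient inequalities of `v` at `u - T(u - û)` and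
of `v̂` at `û + T(u - û)`, gives `∫ (v - v̂) T(u - û) ≥ 0` for every `T ∈ P₀`; since `u - û` is
bounded, a cutoff extends this to every nondecreasing `C¹` function `T` with `T 0 = 0`.

For a convex Lipschitz `G` vanishing on `(-∞, 0]`, the left derivative `G'₋` is a bounded monotone
subgradient selection and the pointwise limit, as `h → 0⁺`, of the `C¹` functions
`a ↦ h⁻¹ ∫_{a-h}^a slope G (t - h) t dt`, which are such `T`. Dominated convergence gives
`∫ (v - v̂) G'₋(u - û) ≥ 0`, and integrating `G b ≥ G a + G'₋(a) (b - a)` gives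
`∫ G(u - û) ≤ ∫ G(u - û + λ(v - v̂))`. A convex Lipschitz `φ ≥ 0` with `φ 0 = 0` is the sum of
`φ (max r 0)` and `φ (-max (-r) 0)`, each of this form up to `r ↦ -r`, and a general `j ∈ J₀` is
the increasing limit of its Pasch–Hausdorff envelopes `inf_s j s + n |r - s|`, so monotone
convergence concludes.
-/

open Set
open scoped NNReal

namespace MemP0

variable {T : ℝ → ℝ}

theorem continuous (hT : MemP0 T) : Continuous T :=
  hT.1.continuous

theorem abs_le (hT : MemP0 T) (r : ℝ) : |T r| ≤ |r| := by
  have hlip : LipschitzWith 1 T := by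
    refine lipschitzWith_of_nnnorm_deriv_le (hT.1.differentiable one_ne_zero) fun x => ?_
    rw [← NNReal.coe_le_coe, coe_nnnorm, Real.norm_eq_abs, NNReal.coe_one, _root_.abs_le]
    exact ⟨by linarith [(hT.2.2.1 x).1], (hT.2.2.1 x).2⟩
  simpa [Real.dist_eq, hT.2.1] using hlip.dist_le_mul r 0

theorem comp_neg (hT : MemP0 T) : MemP0 fun r => -T (-r) := by
  obtain ⟨hC1, h0, hderiv, hsupp⟩ := hT
  have hd : ∀ r, HasDerivAt (fun r => -T (-r)) (deriv T (-r)) r := fun r => by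
    have h := (((hC1.differentiable one_ne_zero) (-r)).hasDerivAt.comp r (hasDerivAt_neg r)).neg
    rwa [mul_neg_one, neg_neg] at h
  have hderiv_eq : deriv (fun r => -T (-r)) = fun r => deriv T (-r) :=
    funext fun r => (hd r).deriv
  refine ⟨?_, by simp [h0], ?_, ?_⟩
  · rw [contDiff_one_iff_deriv, hderiv_eq]
    exact ⟨fun r => (hd r).differentiableAt,
      (contDiff_one_iff_deriv.1 hC1).2.comp continuous_neg⟩
  · simpa [hderiv_eq] using fun r => hderiv (-r)
  · rw [hderiv_eq]
    exact hsupp.comp_homeomorph (Homeomorph.neg ℝ)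

end MemP0

theorem memP0_div_of_hasDerivAt {T T' : ℝ → ℝ} {M : ℝ} (hM : 0 < M)
    (hT : ∀ a, HasDerivAt T (T' a) a) (hT' : Continuous T') (hsupp : HasCompactSupport T')
    (h0 : T 0 = 0) (hbound : ∀ a, 0 ≤ T' a ∧ T' a ≤ M) :
    MemP0 fun a => T a / M := by
  have hd : ∀ a, HasDerivAt (fun a => T a / M) (T' a / M) a := fun a => (hT a).div_const M
  have hderiv_eq : deriv (fun a => T a / M) = fun a => T' a / M := funext fun a => (hd a).deriv
  refine ⟨?_, by simp [h0], fun a => ?_, ?_⟩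
  · rw [contDiff_one_iff_deriv, hderiv_eq]
    exact ⟨fun a => (hd a).differentiableAt, hT'.div_const M⟩
  · rw [hderiv_eq, div_le_one hM]
    exact ⟨div_nonneg (hbound a).1 hM.le, (hbound a).2⟩
  · rw [hderiv_eq]
    exact hsupp.comp_left (g := fun x => x / M) (zero_div M)

theorem exists_memP0_eqOn_Icc {T T' : ℝ → ℝ} (hT : ∀ a, HasDerivAt T (T' a) a)
    (hT' : Continuous T') (hpos : ∀ a, 0 ≤ T' a) (h0 : T 0 = 0) (R : ℝ) :
    ∃ M > 0, ∃ P, MemP0 P ∧ EqOn T (fun a => M * P a) (Icc (-R) R) := by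
  -- cut `T'` off outside `[-R, R]`, integrate back from `0`, and rescale so that `P' ≤ 1`
  obtain ⟨φ, hφ1, -, hφsupp, hφ01⟩ := exists_continuous_one_zero_of_isCompact
    (isCompact_Icc (a := -R) (b := R)) isClosed_empty (disjoint_empty _)
  have hcont : Continuous fun t => T' t * φ t := hT'.mul φ.continuous
  obtain ⟨C, hC⟩ := hcont.bounded_above_of_compact_support hφsupp.mul_left
  have hM : 0 < C + 1 := by linarith [(norm_nonneg _).trans (hC 0)]
  refine ⟨C + 1, hM, fun a => (∫ t in (0 : ℝ)..a, T' t * φ t) / (C + 1), ?_, fun a ha => ?_⟩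
  · refine memP0_div_of_hasDerivAt hM (fun a => (hcont.integral_hasStrictDerivAt 0 a).hasDerivAt)
      hcont hφsupp.mul_left (by simp) fun a => ⟨mul_nonneg (hpos a) (hφ01 a).1, ?_⟩
    linarith [(le_abs_self _).trans (hC a)]
  have hsub : uIcc 0 a ⊆ Icc (-R) R :=
    uIcc_subset_Icc ⟨by linarith [ha.1, ha.2], by linarith [ha.1, ha.2]⟩ ha
  simp only
  rw [mul_div_cancel₀ _ hM.ne',
    intervalIntegral.integral_congr (g := T') fun t ht => by simp [hφ1 (hsub ht)],
    intervalIntegral.integral_eq_sub_of_hasDerivAt (fun t _ => hT t) (hT'.intervalIntegrable _ _),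
    h0, sub_zero]

theorem integral_mul_comp_nonneg_of_forall_memP0 {μ : Measure Ω} {f g : Ω → ℝ} {R : ℝ}
    (hR : ∀ᵐ x ∂μ, |f x| ≤ R) (hP0 : ∀ P, MemP0 P → 0 ≤ ∫ x, g x * P (f x) ∂μ)
    {T T' : ℝ → ℝ} (hT : ∀ a, HasDerivAt T (T' a) a) (hT' : Continuous T')
    (hpos : ∀ a, 0 ≤ T' a) (h0 : T 0 = 0) :
    0 ≤ ∫ x, g x * T (f x) ∂μ := by
  obtain ⟨M, hM, P, hP, hTP⟩ := exists_memP0_eqOn_Icc hT hT' hpos h0 R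
  have hint : ∫ x, g x * T (f x) ∂μ = M * ∫ x, g x * P (f x) ∂μ := by
    rw [← integral_const_mul]
    refine integral_congr_ae ?_
    filter_upwards [hR] with x hx
    rw [hTP (abs_le.1 hx)]
    ring
  rw [hint]
  exact mul_nonneg hM.le (hP0 P hP)

def H2Star (μ : Measure Ω) (E : Lp ℝ 2 μ → WithTop ℝ) : Prop :=
  ∀ u uhat : Lp ℝ 2 μ, ∀ T : ℝ → ℝ, MemP0 T →
    ∀ w z : Lp ℝ 2 μ,
      (w : Ω → ℝ) =ᵐ[μ] (fun x => u x + T (uhat x - u x)) →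
      (z : Ω → ℝ) =ᵐ[μ] (fun x => uhat x - T (uhat x - u x)) →
      E w + E z ≤ E u + E uhat

theorem integral_mul_add_le_of_mem_subGrad {μ : Measure Ω} {E : Lp ℝ 2 μ → WithTop ℝ}
    {p : Lp ℝ 2 μ × Lp ℝ 2 μ} (hp : p ∈ SubGrad μ E) {k : Ω → ℝ} {w : Lp ℝ 2 μ}
    (hw : (w : Ω → ℝ) =ᵐ[μ] fun x => p.1 x + k x) :
    ((∫ x, p.2 x * k x ∂μ : ℝ) : WithTop ℝ) + E p.1 ≤ E w := by
  have h := hp.2 w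
  rwa [integral_congr_ae (g := fun x => p.2 x * k x)
    (by filter_upwards [hw] with x hx; rw [hx, add_sub_cancel_left])] at h

theorem integral_mul_comp_nonneg_of_mem_subGrad {μ : Measure Ω} {E : Lp ℝ 2 μ → WithTop ℝ}
    (hE : H2Star μ E) {p q : Lp ℝ 2 μ × Lp ℝ 2 μ} (hp : p ∈ SubGrad μ E) (hq : q ∈ SubGrad μ E)
    {T : ℝ → ℝ} (hT : MemP0 T) :
    0 ≤ ∫ x, (p.2 x - q.2 x) * T (p.1 x - q.1 x) ∂μ := by
  have hTf : MemLp (fun x => T (p.1 x - q.1 x)) 2 μ := by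
    have hf := (Lp.memLp p.1).sub (Lp.memLp q.1)
    refine hf.of_le (hT.continuous.comp_aestronglyMeasurable hf.1) (ae_of_all _ fun x => ?_)
    simpa only [Real.norm_eq_abs, Pi.sub_apply] using hT.abs_le (p.1 x - q.1 x)
  have hw : MemLp (fun x => q.1 x + T (p.1 x - q.1 x)) 2 μ := (Lp.memLp q.1).add hTf
  have hz : MemLp (fun x => p.1 x - T (p.1 x - q.1 x)) 2 μ := (Lp.memLp p.1).sub hTf
  have hqw := integral_mul_add_le_of_mem_subGrad hq hw.coeFn_toLp
  have hpz := integral_mul_add_le_of_mem_subGrad hp (k := fun x => -T (p.1 x - q.1 x))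
    (hz.coeFn_toLp.trans (ae_of_all _ fun x => sub_eq_add_neg _ _))
  have hsum := (add_le_add hqw hpz).trans (hE q.1 p.1 T hT _ _ hw.coeFn_toLp hz.coeFn_toLp)
  obtain ⟨a, ha⟩ := WithTop.ne_top_iff_exists.1 hp.1.ne
  obtain ⟨b, hb⟩ := WithTop.ne_top_iff_exists.1 hq.1.ne
  rw [← ha, ← hb] at hsum
  have hreal := WithTop.coe_le_coe.1 (by exact_mod_cast hsum)
  simp only [mul_neg, integral_neg] at hreal
  have hp_int : Integrable (fun x => p.2 x * T (p.1 x - q.1 x)) μ :=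
    (Lp.memLp p.2).integrable_mul hTf
  have hq_int : Integrable (fun x => q.2 x * T (p.1 x - q.1 x)) μ :=
    (Lp.memLp q.2).integrable_mul hTf
  simp only [sub_mul]
  rw [integral_sub hp_int hq_int]
  linarith

theorem LipschitzWith.abs_slope_le {G : ℝ → ℝ} {K : ℝ≥0} (hG : LipschitzWith K G) (a b : ℝ) :
    |slope G a b| ≤ K := by
  rcases eq_or_ne a b with rfl | hab
  · simp
  rw [slope_def_field, abs_div, div_le_iff₀ (abs_pos.2 (sub_ne_zero.2 hab.symm))]
  simpa [Real.dist_eq] using hG.dist_le_mul b a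

namespace ConvexOn

variable {G : ℝ → ℝ}

theorem add_leftDeriv_mul_le (hG : ConvexOn ℝ univ G) (a b : ℝ) :
    G a + derivWithin G (Iio a) a * (b - a) ≤ G b := by
  have ha : a ∈ interior (univ : Set ℝ) := by simp
  rcases lt_trichotomy a b with hab | rfl | hba
  · have h := (hG.leftDeriv_le_rightDeriv_of_mem_interior ha).trans <| hG.rightDeriv_le_slope
      (mem_univ a) (mem_univ b) hab (hG.differentiableWithinAt_Ioi_of_mem_interior ha)
    rw [slope_def_field, le_div_iff₀ (sub_pos.2 hab)] at h
    linarith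
  · simp
  · have h := hG.slope_le_leftDeriv_of_mem_interior (mem_univ b) ha hba
    rw [slope_def_field, div_le_iff₀ (sub_pos.2 hba)] at h
    linarith

theorem monotone_leftDeriv (hG : ConvexOn ℝ univ G) :
    Monotone fun a => derivWithin G (Iio a) a :=
  monotoneOn_univ.1 (by simpa using hG.monotoneOn_leftDeriv)

theorem tendsto_slope_sub_leftDeriv (hG : ConvexOn ℝ univ G) (a : ℝ) :
    Tendsto (fun h => slope G (a - h) a) (𝓝[>] 0) (𝓝 (derivWithin G (Iio a) a)) := by
  have hd := hG.hasDerivWithinAt_leftDeriv_of_mem_interior (x := a) (by simp)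
  rw [hasDerivWithinAt_iff_tendsto_slope, sdiff_singleton_eq_self self_notMem_Iio] at hd
  have hsub : Tendsto (fun h => a - h) (𝓝[>] 0) (𝓝[<] a) := by
    refine tendsto_nhdsWithin_iff.2 ⟨?_, eventually_nhdsWithin_of_forall fun h hh => ?_⟩
    · simpa using ((continuous_sub_left a).tendsto 0).mono_left nhdsWithin_le_nhds
    · exact sub_lt_self a hh
  simpa [slope_comm, Function.comp_def] using hd.comp hsub

theorem abs_leftDeriv_le (hG : ConvexOn ℝ univ G) {K : ℝ≥0} (hlip : LipschitzWith K G)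
    (a : ℝ) : |derivWithin G (Iio a) a| ≤ K :=
  le_of_tendsto (hG.tendsto_slope_sub_leftDeriv a).abs
    (Eventually.of_forall fun _ => hlip.abs_slope_le _ _)

theorem slope_sub_le_slope_sub (hG : ConvexOn ℝ univ G) {h x y : ℝ} (hh : 0 < h)
    (hxy : x ≤ y) : slope G (x - h) x ≤ slope G (y - h) y := by
  calc slope G (x - h) x ≤ slope G (x - h) y :=
        hG.slope_mono (mem_univ _) ⟨mem_univ _, by simp; linarith⟩
          ⟨mem_univ _, by simp; linarith⟩ hxy
    _ = slope G y (x - h) := slope_comm _ _ _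
    _ ≤ slope G y (y - h) :=
        hG.slope_mono (mem_univ _) ⟨mem_univ _, by simp; linarith⟩
          ⟨mem_univ _, by simp; linarith⟩ (by linarith)
    _ = slope G (y - h) y := slope_comm _ _ _

end ConvexOn

theorem Continuous.hasDerivAt_integral_sub_const_self {F : ℝ → ℝ} (hF : Continuous F) (h a : ℝ) :
    HasDerivAt (fun a => ∫ t in (a - h)..a, F t) (F a - F (a - h)) a := by
  have e : (fun a => ∫ t in (a - h)..a, F t) =
      fun a => (∫ t in (0 : ℝ)..a, F t) - ∫ t in (0 : ℝ)..(a - h), F t :=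
    funext fun a => (intervalIntegral.integral_interval_sub_left
      (hF.intervalIntegrable _ _) (hF.intervalIntegrable _ _)).symm
  rw [e]
  exact (hF.integral_hasStrictDerivAt 0 a).hasDerivAt.sub
    ((hF.integral_hasStrictDerivAt 0 (a - h)).hasDerivAt.comp_sub_const a h)

def smoothedSlope (G : ℝ → ℝ) (h a : ℝ) : ℝ :=
  h⁻¹ * ∫ t in (a - h)..a, slope G (t - h) t

section SmoothedSlope

variable {G : ℝ → ℝ} {h : ℝ}

theorem continuous_slope_sub (hG : Continuous G) (h : ℝ) :
    Continuous fun t => slope G (t - h) t := by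
  simp only [slope, sub_sub_cancel, vsub_eq_sub, smul_eq_mul]
  fun_prop

theorem hasDerivAt_smoothedSlope (hG : Continuous G) (h a : ℝ) :
    HasDerivAt (smoothedSlope G h)
      (h⁻¹ * (slope G (a - h) a - slope G (a - h - h) (a - h))) a :=
  ((continuous_slope_sub hG h).hasDerivAt_integral_sub_const_self h a).const_mul h⁻¹

theorem continuous_smoothedSlope (hG : Continuous G) (h : ℝ) : Continuous (smoothedSlope G h) :=
  continuous_iff_continuousAt.2 fun a => (hasDerivAt_smoothedSlope hG h a).continuousAt

theorem smoothedSlope_zero (hG : ∀ r ≤ 0, G r = 0) (hh : 0 ≤ h) : smoothedSlope G h 0 = 0 := by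
  have hslope : EqOn (fun t => slope G (t - h) t) 0 (uIcc (0 - h) 0) := fun t ht => by
    have ht0 : t ≤ 0 := by
      rw [uIcc_of_le (by linarith)] at ht
      exact ht.2
    simp [slope_def_field, hG t ht0, hG (t - h) (by linarith)]
  rw [smoothedSlope, intervalIntegral.integral_congr hslope]
  simp

theorem ConvexOn.smoothedSlope_mem_Icc (hconv : ConvexOn ℝ univ G) (hcont : Continuous G)
    (hh : 0 < h) (a : ℝ) :
    smoothedSlope G h a ∈ Icc (slope G (a - h - h) (a - h)) (slope G (a - h) a) := by
  have hint := (continuous_slope_sub hcont h).intervalIntegrable (μ := volume) (a - h) a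
  have hle : a - h ≤ a := by linarith
  have hmono : ∀ t ∈ Icc (a - h) a,
      slope G (a - h - h) (a - h) ≤ slope G (t - h) t ∧ slope G (t - h) t ≤ slope G (a - h) a :=
    fun t ht => ⟨hconv.slope_sub_le_slope_sub hh ht.1, hconv.slope_sub_le_slope_sub hh ht.2⟩
  have hlower := intervalIntegral.integral_mono_on hle intervalIntegrable_const hint
    fun t ht => (hmono t ht).1
  have hupper := intervalIntegral.integral_mono_on hle hint intervalIntegrable_const
    fun t ht => (hmono t ht).2
  simp only [intervalIntegral.integral_const, sub_sub_cancel, smul_eq_mul] at hlower hupper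
  constructor
  · rw [smoothedSlope, le_inv_mul_iff₀ hh]
    exact hlower
  · rw [smoothedSlope, inv_mul_le_iff₀ hh]
    exact hupper

theorem ConvexOn.tendsto_smoothedSlope (hconv : ConvexOn ℝ univ G) (hcont : Continuous G)
    (a : ℝ) :
    Tendsto (fun h => smoothedSlope G h a) (𝓝[>] 0) (𝓝 (derivWithin G (Iio a) a)) := by
  have hupper := hconv.tendsto_slope_sub_leftDeriv a
  have htwice : Tendsto (fun h : ℝ => 2 * h) (𝓝[>] 0) (𝓝[>] 0) := by
    refine tendsto_nhdsWithin_iff.2 ⟨?_, eventually_nhdsWithin_of_forall fun h hh => ?_⟩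
    · simpa using ((continuous_const_mul (2 : ℝ)).tendsto 0).mono_left nhdsWithin_le_nhds
    · exact mul_pos two_pos (mem_Ioi.1 hh)
  have hlower : Tendsto (fun h => 2 * slope G (a - 2 * h) a - slope G (a - h) a) (𝓝[>] 0)
      (𝓝 (derivWithin G (Iio a) a)) := by
    simpa [two_mul] using ((hupper.comp htwice).const_mul 2).sub hupper
  refine tendsto_of_tendsto_of_tendsto_of_le_of_le' hlower hupper ?_ ?_ <;>
    filter_upwards [self_mem_nhdsWithin] with h (hh : 0 < h)
  · have hsplit : slope G (a - h - h) (a - h) = 2 * slope G (a - 2 * h) a - slope G (a - h) a := by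
      rw [slope_def_field, slope_def_field, slope_def_field, show a - h - h = a - 2 * h by ring,
        show a - h - (a - 2 * h) = h by ring, show a - (a - 2 * h) = 2 * h by ring, sub_sub_cancel]
      field_simp
      ring
    exact hsplit ▸ (hconv.smoothedSlope_mem_Icc hcont hh a).1
  · exact (hconv.smoothedSlope_mem_Icc hcont hh a).2

theorem ConvexOn.abs_smoothedSlope_le (hconv : ConvexOn ℝ univ G) {K : ℝ≥0}
    (hlip : LipschitzWith K G) (hh : 0 < h) (a : ℝ) : |smoothedSlope G h a| ≤ K := by
  have hbounds := hconv.smoothedSlope_mem_Icc hlip.continuous hh a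
  refine abs_le.2 ⟨?_, ?_⟩
  · linarith [abs_le.1 (hlip.abs_slope_le (a - h - h) (a - h)), hbounds.1]
  · linarith [abs_le.1 (hlip.abs_slope_le (a - h) a), hbounds.2]

end SmoothedSlope

theorem LipschitzWith.integrable_comp {μ : Measure Ω} {G : ℝ → ℝ} {K : ℝ≥0}
    (hG : LipschitzWith K G) (hG0 : G 0 = 0) {u : Ω → ℝ} (hu : Integrable u μ) :
    Integrable (fun x => G (u x)) μ :=
  memLp_one_iff_integrable.1 (hG.comp_memLp hG0 (memLp_one_iff_integrable.2 hu))


section Integral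

variable {μ : Measure Ω} {f g : Ω → ℝ} {R : ℝ} {G : ℝ → ℝ} {K : ℝ≥0}

theorem integral_mul_smoothedSlope_comp_nonneg (hconv : ConvexOn ℝ univ G)
    (hcont : Continuous G) (hG : ∀ r ≤ 0, G r = 0) (hR : ∀ᵐ x ∂μ, |f x| ≤ R)
    (hP0 : ∀ T, MemP0 T → 0 ≤ ∫ x, g x * T (f x) ∂μ) {h : ℝ} (hh : 0 < h) :
    0 ≤ ∫ x, g x * smoothedSlope G h (f x) ∂μ := by
  have hderiv_cont : Continuous fun a => h⁻¹ * (slope G (a - h) a - slope G (a - h - h) (a - h)) :=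
    continuous_const.mul ((continuous_slope_sub hcont h).sub
      ((continuous_slope_sub hcont h).comp (continuous_sub_right h)))
  refine integral_mul_comp_nonneg_of_forall_memP0 hR hP0 (hasDerivAt_smoothedSlope hcont h)
    hderiv_cont (fun a => ?_) (smoothedSlope_zero hG hh.le)
  exact mul_nonneg (inv_nonneg.2 hh.le)
    (sub_nonneg.2 (hconv.slope_sub_le_slope_sub hh (sub_le_self a hh.le)))

theorem integral_mul_leftDeriv_comp_nonneg (hconv : ConvexOn ℝ univ G)
    (hlip : LipschitzWith K G) (hG : ∀ r ≤ 0, G r = 0) (hf : AEStronglyMeasurable f μ)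
    (hg : Integrable g μ) (hR : ∀ᵐ x ∂μ, |f x| ≤ R)
    (hP0 : ∀ T, MemP0 T → 0 ≤ ∫ x, g x * T (f x) ∂μ) :
    0 ≤ ∫ x, g x * derivWithin G (Iio (f x)) (f x) ∂μ := by
  have hcont := hlip.continuous
  have hlim : Tendsto (fun h => ∫ x, g x * smoothedSlope G h (f x) ∂μ) (𝓝[>] 0)
      (𝓝 (∫ x, g x * derivWithin G (Iio (f x)) (f x) ∂μ)) := by
    refine tendsto_integral_filter_of_dominated_convergence (fun x => K * |g x|)
      (Eventually.of_forall fun h =>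
        hg.1.mul ((continuous_smoothedSlope hcont h).comp_aestronglyMeasurable hf)) ?_
      (hg.abs.const_mul K) (ae_of_all _ fun x =>
        ((hconv.tendsto_smoothedSlope hcont (f x)).const_mul (g x)))
    filter_upwards [self_mem_nhdsWithin] with h (hh : 0 < h)
    refine ae_of_all _ fun x => ?_
    rw [norm_mul, Real.norm_eq_abs, Real.norm_eq_abs, mul_comm]
    exact mul_le_mul_of_nonneg_right (hconv.abs_smoothedSlope_le hlip hh (f x)) (abs_nonneg _)
  refine ge_of_tendsto hlim ?_
  filter_upwards [self_mem_nhdsWithin] with h (hh : 0 < h)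
  exact integral_mul_smoothedSlope_comp_nonneg hconv hcont hG hR hP0 hh

theorem integral_comp_le_integral_comp_add_of_eq_zero_of_nonpos (hconv : ConvexOn ℝ univ G)
    (hlip : LipschitzWith K G) (hG : ∀ r ≤ 0, G r = 0) (hf : Integrable f μ)
    (hg : Integrable g μ) (hR : ∀ᵐ x ∂μ, |f x| ≤ R)
    (hP0 : ∀ T, MemP0 T → 0 ≤ ∫ x, g x * T (f x) ∂μ) {lam : ℝ} (hlam : 0 ≤ lam) :
    ∫ x, G (f x) ∂μ ≤ ∫ x, G (f x + lam * g x) ∂μ := by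
  have hG_int : ∀ {u : Ω → ℝ}, Integrable u μ → Integrable (fun x => G (u x)) μ :=
    hlip.integrable_comp (hG 0 le_rfl)
  have hq_int : Integrable (fun x => g x * derivWithin G (Iio (f x)) (f x)) μ :=
    hg.mul_bdd
      (hconv.monotone_leftDeriv.measurable.comp_aemeasurable hf.1.aemeasurable).aestronglyMeasurable
      (ae_of_all _ fun x => (hconv.abs_leftDeriv_le hlip (f x)))
  calc ∫ x, G (f x) ∂μ
      ≤ ∫ x, G (f x) ∂μ + lam * ∫ x, g x * derivWithin G (Iio (f x)) (f x) ∂μ :=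
        le_add_of_nonneg_right (mul_nonneg hlam
          (integral_mul_leftDeriv_comp_nonneg hconv hlip hG hf.1 hg hR hP0))
    _ = ∫ x, (G (f x) + lam * (g x * derivWithin G (Iio (f x)) (f x))) ∂μ := by
        rw [← integral_const_mul, ← integral_add (hG_int hf) (hq_int.const_mul lam)]
    _ ≤ ∫ x, G (f x + lam * g x) ∂μ :=
        integral_mono ((hG_int hf).add (hq_int.const_mul lam))
          (hG_int (hf.add (hg.const_mul lam))) fun x =>
            (le_of_eq (by ring)).trans (hconv.add_leftDeriv_mul_le (f x) (f x + lam * g x))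

end Integral

section PositivePart

variable {φ : ℝ → ℝ}

theorem ConvexOn.monotoneOn_Ici_zero (hconv : ConvexOn ℝ univ φ) (hmin : ∀ r, φ 0 ≤ φ r) :
    MonotoneOn φ (Ici 0) := by
  intro x hx y _ hxy
  rcases (mem_Ici.1 hx).eq_or_lt with rfl | hx0
  · exact hmin y
  rcases hxy.eq_or_lt with rfl | hxy
  · exact le_rfl
  exact hconv.le_right_of_left_le (mem_univ 0) (mem_univ y)
    (by rw [openSegment_eq_Ioo (hx0.trans hxy)]; exact ⟨hx0, hxy⟩) (hmin x)

theorem ConvexOn.comp_max_zero (hconv : ConvexOn ℝ univ φ) (hmin : ∀ r, φ 0 ≤ φ r) :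
    ConvexOn ℝ univ fun r => φ (max r 0) := by
  have himage : (fun r : ℝ => max r 0) '' univ = Ici 0 := by
    ext r
    refine ⟨fun ⟨s, _, hs⟩ => hs ▸ le_max_right s 0, fun hr => ⟨r, mem_univ r, max_eq_left hr⟩⟩
  have hmax : ConvexOn ℝ univ fun r : ℝ => max r 0 :=
    (convexOn_id convex_univ).sup (convexOn_const 0 convex_univ)
  refine ConvexOn.comp (hconv.subset (subset_univ _) ?_) hmax ?_
  · rw [himage]
    exact convex_Ici 0
  · rw [himage]
    exact hconv.monotoneOn_Ici_zero hmin

end PositivePart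

section Split

variable {μ : Measure Ω} {f g : Ω → ℝ} {R : ℝ} {φ : ℝ → ℝ} {K : ℝ≥0}

theorem LipschitzWith.comp_max_zero (hlip : LipschitzWith K φ) :
    LipschitzWith K fun r => φ (max r 0) := by
  have h := hlip.comp (LipschitzWith.id.max_const 0)
  rwa [mul_one] at h

theorem integral_comp_max_zero_le (hconv : ConvexOn ℝ univ φ) (hlip : LipschitzWith K φ)
    (h0 : φ 0 = 0) (hnonneg : ∀ r, 0 ≤ φ r) (hf : Integrable f μ) (hg : Integrable g μ)
    (hR : ∀ᵐ x ∂μ, |f x| ≤ R) (hP0 : ∀ T, MemP0 T → 0 ≤ ∫ x, g x * T (f x) ∂μ)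
    {lam : ℝ} (hlam : 0 ≤ lam) :
    ∫ x, φ (max (f x) 0) ∂μ ≤ ∫ x, φ (max (f x + lam * g x) 0) ∂μ :=
  integral_comp_le_integral_comp_add_of_eq_zero_of_nonpos
    (hconv.comp_max_zero fun r => h0.symm ▸ hnonneg r) hlip.comp_max_zero
    (fun r hr => by simp [max_eq_right hr, h0]) hf hg hR hP0 hlam

theorem integral_comp_le_integral_comp_add (hconv : ConvexOn ℝ univ φ)
    (hlip : LipschitzWith K φ) (h0 : φ 0 = 0) (hnonneg : ∀ r, 0 ≤ φ r) (hf : Integrable f μ)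
    (hg : Integrable g μ) (hR : ∀ᵐ x ∂μ, |f x| ≤ R)
    (hP0 : ∀ T, MemP0 T → 0 ≤ ∫ x, g x * T (f x) ∂μ) {lam : ℝ} (hlam : 0 ≤ lam) :
    ∫ x, φ (f x) ∂μ ≤ ∫ x, φ (f x + lam * g x) ∂μ := by
  have hconv_neg : ConvexOn ℝ univ fun r => φ (-r) := hconv.comp_linearMap (-LinearMap.id)
  have hlip_neg : LipschitzWith K fun r => φ (-r) :=
    LipschitzWith.of_dist_le_mul fun a b => (hlip.dist_le_mul (-a) (-b)).trans_eq
      (by rw [Real.dist_eq, Real.dist_eq, neg_sub_neg, abs_sub_comm])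
  have hP0_neg : ∀ T, MemP0 T → 0 ≤ ∫ x, -g x * T (-f x) ∂μ := fun T hT => by
    simpa [neg_mul_comm] using hP0 _ hT.comp_neg
  have hpos := integral_comp_max_zero_le hconv hlip h0 hnonneg hf hg hR hP0 hlam
  have hneg := integral_comp_max_zero_le (f := fun x => -f x) (g := fun x => -g x) hconv_neg
    hlip_neg (by simp [h0]) (fun r => hnonneg _) hf.neg hg.neg (by simpa using hR) hP0_neg hlam
  have hsplit : ∀ r, φ r = φ (max r 0) + φ (-max (-r) 0) := fun r => by
    rcases le_total r 0 with hr | hr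
    · simp [max_eq_right hr, max_eq_left (neg_nonneg.2 hr), h0]
    · simp [max_eq_left hr, max_eq_right (neg_nonpos.2 hr), h0]
  have hint : ∀ {u : Ω → ℝ}, Integrable u μ → ∫ x, φ (u x) ∂μ =
      ∫ x, φ (max (u x) 0) ∂μ + ∫ x, φ (-max (-u x) 0) ∂μ := fun {u} hu => by
    have hu_pos : Integrable (fun x => φ (max (u x) 0)) μ :=
      hlip.comp_max_zero.integrable_comp (by simp [h0]) hu
    have hu_neg : Integrable (fun x => φ (-max (-u x) 0)) μ :=
      hlip_neg.comp_max_zero.integrable_comp (by simp [h0]) hu.neg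
    rw [← integral_add hu_pos hu_neg]
    exact integral_congr_ae (ae_of_all _ fun x => hsplit (u x))
  rw [hint hf, hint (u := fun x => f x + lam * g x) (hf.add (hg.const_mul lam))]
  refine add_le_add hpos (hneg.trans_eq ?_)
  simp only [neg_add, mul_neg]

end Split

/-- The Pasch–Hausdorff envelope: the largest `n`-Lipschitz minorant of `j`. -/
def lipEnvelope (j : ℝ → ℝ≥0∞) (n : ℕ) (r : ℝ) : ℝ≥0∞ :=
  ⨅ s, j s + ENNReal.ofReal (n * |r - s|)

section LipEnvelope

variable {j : ℝ → ℝ≥0∞}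

theorem lipEnvelope_le (j : ℝ → ℝ≥0∞) (n : ℕ) (r : ℝ) : lipEnvelope j n r ≤ j r :=
  (iInf_le _ r).trans_eq (by simp)

theorem lipEnvelope_mono (j : ℝ → ℝ≥0∞) (r : ℝ) : Monotone fun n => lipEnvelope j n r :=
  fun _ _ hmn => iInf_mono fun _ => by gcongr

theorem lipEnvelope_le_add (j : ℝ → ℝ≥0∞) (n : ℕ) (a b : ℝ) :
    lipEnvelope j n a ≤ lipEnvelope j n b + ENNReal.ofReal (n * |a - b|) := by
  rw [lipEnvelope, lipEnvelope, ENNReal.iInf_add]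
  refine iInf_mono fun s => ?_
  rw [add_assoc, ← ENNReal.ofReal_add (by positivity) (by positivity), ← mul_add]
  gcongr
  exact (abs_sub_le a b s).trans_eq (add_comm _ _)

theorem lipEnvelope_ne_top (hj0 : j 0 = 0) (n : ℕ) (r : ℝ) : lipEnvelope j n r ≠ ⊤ :=
  ne_top_of_le_ne_top ENNReal.ofReal_ne_top
    ((iInf_le _ 0).trans_eq (by rw [hj0, zero_add, sub_zero]))

theorem lipEnvelope_zero (hj0 : j 0 = 0) (n : ℕ) : lipEnvelope j n 0 = 0 :=
  le_antisymm ((lipEnvelope_le j n 0).trans_eq hj0) bot_le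

theorem lipschitzWith_toReal_lipEnvelope (hj0 : j 0 = 0) (n : ℕ) :
    LipschitzWith n fun r => (lipEnvelope j n r).toReal := by
  refine LipschitzWith.of_le_add_mul _ fun a b => ?_
  rw [Real.dist_eq, NNReal.coe_natCast, ← ENNReal.toReal_ofReal (by positivity : 0 ≤ n * |a - b|),
    ← ENNReal.toReal_add (lipEnvelope_ne_top hj0 n b) ENNReal.ofReal_ne_top]
  exact ENNReal.toReal_mono (ENNReal.add_ne_top.2 ⟨lipEnvelope_ne_top hj0 n b,
    ENNReal.ofReal_ne_top⟩) (lipEnvelope_le_add j n a b)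

theorem continuous_lipEnvelope (hj0 : j 0 = 0) (n : ℕ) : Continuous (lipEnvelope j n) := by
  have h : lipEnvelope j n = fun r => ENNReal.ofReal (lipEnvelope j n r).toReal :=
    funext fun r => (ENNReal.ofReal_toReal (lipEnvelope_ne_top hj0 n r)).symm
  rw [h]
  exact ENNReal.continuous_ofReal.comp (lipschitzWith_toReal_lipEnvelope hj0 n).continuous

theorem LowerSemicontinuous.iSup_lipEnvelope (hj : LowerSemicontinuous j) (r : ℝ) :
    ⨆ n : ℕ, lipEnvelope j n r = j r := by
  refine le_antisymm (iSup_le fun n => lipEnvelope_le j n r) (le_of_forall_lt fun c hc => ?_)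
  obtain ⟨c', hcc', hc'⟩ := exists_between hc
  -- lower semicontinuity: `j > c'` near `r`, and far from `r` the penalty `n |r - s|` exceeds `c'`
  obtain ⟨ε, hε, hball⟩ := Metric.eventually_nhds_iff.1 (hj r c' hc')
  obtain ⟨n, hn⟩ := exists_nat_ge (c'.toReal / ε)
  refine hcc'.trans_le (le_trans ?_ (le_iSup (fun n : ℕ => lipEnvelope j n r) n))
  refine le_iInf fun s => ?_
  rcases lt_or_ge (dist s r) ε with hd | hd
  · exact (hball hd).le.trans le_self_add
  · refine le_add_left ((ENNReal.ofReal_toReal hc'.ne_top).symm.trans_le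
      (ENNReal.ofReal_le_ofReal ?_))
    rw [div_le_iff₀ hε] at hn
    rw [Real.dist_eq, abs_sub_comm] at hd
    nlinarith [ENNReal.toReal_nonneg (a := c')]

theorem MemJ0.lipEnvelope_convex (hj : MemJ0 j) (n : ℕ) {a b t : ℝ} (ht0 : 0 ≤ t) (ht1 : t ≤ 1) :
    lipEnvelope j n (t * a + (1 - t) * b) ≤
      ENNReal.ofReal t * lipEnvelope j n a + ENNReal.ofReal (1 - t) * lipEnvelope j n b := by
  have ht1' : 0 ≤ 1 - t := by linarith
  unfold lipEnvelope
  rw [ENNReal.mul_iInf fun h => absurd h ENNReal.ofReal_ne_top,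
    ENNReal.mul_iInf fun h => absurd h ENNReal.ofReal_ne_top, ENNReal.iInf_add]
  refine le_iInf fun s => ?_
  rw [ENNReal.add_iInf]
  refine le_iInf fun s' => (iInf_le _ (t * s + (1 - t) * s')).trans ?_
  have hdist : ENNReal.ofReal (n * |t * a + (1 - t) * b - (t * s + (1 - t) * s')|) ≤
      ENNReal.ofReal t * ENNReal.ofReal (n * |a - s|) +
        ENNReal.ofReal (1 - t) * ENNReal.ofReal (n * |b - s'|) := by
    rw [← ENNReal.ofReal_mul ht0, ← ENNReal.ofReal_mul ht1',
      ← ENNReal.ofReal_add (by positivity) (by positivity)]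
    refine ENNReal.ofReal_le_ofReal ?_
    have htri : |t * a + (1 - t) * b - (t * s + (1 - t) * s')| ≤
        t * |a - s| + (1 - t) * |b - s'| := by
      calc _ = |t * (a - s) + (1 - t) * (b - s')| := by ring_nf
        _ ≤ _ := (abs_add_le _ _).trans_eq (by
          rw [abs_mul, abs_mul, abs_of_nonneg ht0, abs_of_nonneg ht1'])
    calc _ ≤ (n : ℝ) * (t * |a - s| + (1 - t) * |b - s'|) := by gcongr
      _ = _ := by ring
  calc _ ≤ (ENNReal.ofReal t * j s + ENNReal.ofReal (1 - t) * j s') +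
        (ENNReal.ofReal t * ENNReal.ofReal (n * |a - s|) +
          ENNReal.ofReal (1 - t) * ENNReal.ofReal (n * |b - s'|)) :=
        add_le_add (hj.2.2 s s' t ht0 ht1) hdist
    _ = _ := by ring

theorem MemJ0.convexOn_toReal_lipEnvelope (hj : MemJ0 j) (n : ℕ) :
    ConvexOn ℝ univ fun r => (lipEnvelope j n r).toReal := by
  refine ⟨convex_univ, fun a _ b _ t t' ht ht' htt' => ?_⟩
  obtain rfl : t' = 1 - t := by linarith
  have ha : ENNReal.ofReal t * lipEnvelope j n a ≠ ⊤ :=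
    ENNReal.mul_ne_top ENNReal.ofReal_ne_top (lipEnvelope_ne_top hj.2.1 n a)
  have hb : ENNReal.ofReal (1 - t) * lipEnvelope j n b ≠ ⊤ :=
    ENNReal.mul_ne_top ENNReal.ofReal_ne_top (lipEnvelope_ne_top hj.2.1 n b)
  have h := ENNReal.toReal_mono (ENNReal.add_ne_top.2 ⟨ha, hb⟩)
    (hj.lipEnvelope_convex n (a := a) (b := b) ht (by linarith))
  rwa [ENNReal.toReal_add ha hb, ENNReal.toReal_mul, ENNReal.toReal_mul,
    ENNReal.toReal_ofReal ht, ENNReal.toReal_ofReal ht'] at h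

end LipEnvelope

theorem MeasureTheory.MemLp.ae_abs_le {μ : Measure Ω} {u : Ω → ℝ} (hu : MemLp u ⊤ μ) :
    ∀ᵐ x ∂μ, |u x| ≤ (eLpNorm u ⊤ μ).toReal := by
  have hfin : eLpNormEssSup u μ ≠ ⊤ := by simpa [eLpNorm_exponent_top] using hu.2.ne
  filter_upwards [ae_le_eLpNormEssSup (f := u) (μ := μ)] with x hx
  simpa [eLpNorm_exponent_top] using ENNReal.toReal_mono hfin hx

theorem MemJ0.lintegral_comp_le_lintegral_comp_add {j : ℝ → ℝ≥0∞} (hj : MemJ0 j)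
    {μ : Measure Ω} {f g : Ω → ℝ} {R : ℝ} (hf : Integrable f μ) (hg : Integrable g μ)
    (hR : ∀ᵐ x ∂μ, |f x| ≤ R) (hP0 : ∀ T, MemP0 T → 0 ≤ ∫ x, g x * T (f x) ∂μ)
    {lam : ℝ} (hlam : 0 ≤ lam) :
    ∫⁻ x, j (f x) ∂μ ≤ ∫⁻ x, j (f x + lam * g x) ∂μ := by
  have hlip := lipschitzWith_toReal_lipEnvelope hj.2.1
  have hlintegral : ∀ n {u : Ω → ℝ}, Integrable u μ →
      ∫⁻ x, lipEnvelope j n (u x) ∂μ = ENNReal.ofReal (∫ x, (lipEnvelope j n (u x)).toReal ∂μ) :=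
    fun n u hu => by
      rw [ofReal_integral_eq_lintegral_ofReal
        ((hlip n).integrable_comp (by simp [lipEnvelope_zero hj.2.1]) hu)
        (ae_of_all _ fun _ => ENNReal.toReal_nonneg)]
      simp_rw [ENNReal.ofReal_toReal (lipEnvelope_ne_top hj.2.1 n _)]
  have hstep : ∀ n : ℕ, ∫⁻ x, lipEnvelope j n (f x) ∂μ ≤ ∫⁻ x, j (f x + lam * g x) ∂μ :=
    fun n => calc
      _ ≤ ∫⁻ x, lipEnvelope j n (f x + lam * g x) ∂μ := by
        rw [hlintegral n hf, hlintegral n (u := fun x => f x + lam * g x)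
          (hf.add (hg.const_mul lam))]
        exact ENNReal.ofReal_le_ofReal (integral_comp_le_integral_comp_add
          (hj.convexOn_toReal_lipEnvelope n) (hlip n) (by simp [lipEnvelope_zero hj.2.1])
          (fun _ => ENNReal.toReal_nonneg) hf hg hR hP0 hlam)
      _ ≤ _ := lintegral_mono fun x => lipEnvelope_le j n _
  have hmeas : ∀ n : ℕ, AEMeasurable (fun x => lipEnvelope j n (f x)) μ := fun n =>
    (continuous_lipEnvelope hj.2.1 n).measurable.comp_aemeasurable hf.1.aemeasurable
  calc ∫⁻ x, j (f x) ∂μ = ∫⁻ x, ⨆ n : ℕ, lipEnvelope j n (f x) ∂μ := by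
        simp_rw [hj.1.iSup_lipEnvelope]
    _ = ⨆ n : ℕ, ∫⁻ x, lipEnvelope j n (f x) ∂μ :=
        lintegral_iSup' hmeas (ae_of_all _ fun x => lipEnvelope_mono j (f x))
    _ ≤ _ := iSup_le hstep

theorem completely_accretive_of_H2star_general
    (μ : Measure Ω)
    (E : Lp ℝ 2 μ → WithTop ℝ)
    (H2star : ∀ u uhat : Lp ℝ 2 μ, ∀ T : ℝ → ℝ, MemP0 T →
      ∀ w z : Lp ℝ 2 μ,
        (w : Ω → ℝ) =ᵐ[μ] (fun x => u x + T (uhat x - u x)) →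
        (z : Ω → ℝ) =ᵐ[μ] (fun x => uhat x - T (uhat x - u x)) →
        E w + E z ≤ E u + E uhat) :
    ∀ p ∈ PartA μ E, ∀ q ∈ PartA μ E, ∀ lam : ℝ, 0 < lam →
      ∀ j : ℝ → ℝ≥0∞, MemJ0 j →
        ∫⁻ x, j (p.1 x - q.1 x) ∂μ ≤
          ∫⁻ x, j (p.1 x - q.1 x + lam * (p.2 x - q.2 x)) ∂μ := by
  rintro p ⟨hp, hp1, hp1_bdd, hp2, -⟩ q ⟨hq, hq1, hq1_bdd, hq2, -⟩ lam hlam j hj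
  refine hj.lintegral_comp_le_lintegral_comp_add (f := fun x => p.1 x - q.1 x)
    (g := fun x => p.2 x - q.2 x) (R := (eLpNorm p.1 ⊤ μ).toReal + (eLpNorm q.1 ⊤ μ).toReal)
    ((memLp_one_iff_integrable.1 hp1).sub (memLp_one_iff_integrable.1 hq1))
    ((memLp_one_iff_integrable.1 hp2).sub (memLp_one_iff_integrable.1 hq2)) ?_
    (fun T hT => integral_mul_comp_nonneg_of_mem_subGrad H2star hp hq hT) hlam.le
  filter_upwards [hp1_bdd.ae_abs_le, hq1_bdd.ae_abs_le] with x hpx hqx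
  exact (abs_sub _ _).trans (add_le_add hpx hqx)

/-- **(H2*) implies complete accretivity of `A = (∂E)|_{L^{1∩∞}}`**
(Bénilan–Crandall). Let `(Ω, 𝔅, μ)` be a σ-finite measure space and
`E : L² → (−∞, +∞]` proper, lower semicontinuous and convex, satisfying
(H2*): `E(u + T∘(û − u)) + E(û − T∘(û − u)) ≤ E(u) + E(û)` for all
`u, û ∈ L²` and `T ∈ P₀`. Then the part `A = ∂E ∩ (L^{1∩∞} × L^{1∩∞})` is
completely accretive: for all `(u, v), (û, v̂) ∈ A`, `λ > 0` and `j ∈ J₀`,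
`∫ j(u − û) dμ ≤ ∫ j(u − û + λ(v − v̂)) dμ`. -/
theorem completely_accretive_of_H2star
    (μ : Measure Ω) [SigmaFinite μ]
    (E : Lp ℝ 2 μ → WithTop ℝ)
    (hproper : ∃ u : Lp ℝ 2 μ, E u < ⊤)
    (hlsc : LowerSemicontinuous E)
    (hconv : ∀ u v : Lp ℝ 2 μ, ∀ t : ℝ, 0 ≤ t → t ≤ 1 →
      E (t • u + (1 - t) • v) ≤ (t : WithTop ℝ) * E u + ((1 - t : ℝ) : WithTop ℝ) * E v)
    (H2star : ∀ u uhat : Lp ℝ 2 μ, ∀ T : ℝ → ℝ, MemP0 T →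
      ∀ w z : Lp ℝ 2 μ,
        (w : Ω → ℝ) =ᵐ[μ] (fun x => u x + T (uhat x - u x)) →
        (z : Ω → ℝ) =ᵐ[μ] (fun x => uhat x - T (uhat x - u x)) →
        E w + E z ≤ E u + E uhat) :
    ∀ p ∈ PartA μ E, ∀ q ∈ PartA μ E, ∀ lam : ℝ, 0 < lam →
      ∀ j : ℝ → ℝ≥0∞, MemJ0 j →
        ∫⁻ x, j (p.1 x - q.1 x) ∂μ ≤
          ∫⁻ x, j (p.1 x - q.1 x + lam * (p.2 x - q.2 x)) ∂μ :=
  completely_accretive_of_H2star_general μ E H2star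

end
end

section
/- Let (Σ, 𝔅, μ) be a σ-finite measure space, f ∈ L¹(Σ, μ) ∩ L^∞(Σ, μ), and let u : Σ → ℝ be measurable with ∫_Σ j(u) dμ ≤ ∫_Σ j(f) dμ for every j ∈ J₀. Then ‖u‖_{L^∞} ≤ ‖f‖_{L^∞} and ‖u‖_{L^p} ≤ ‖f‖_{L^p} for every p ∈ [1, ∞); in particular u ∈ L¹ ∩ L^∞ ⊆ L². -/
open MeasureTheory Filter Topology
open scoped ENNReal

lemma memJ0_ofReal_comp {g : ℝ → ℝ} (hconv : ConvexOn ℝ Set.univ g)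
    (hlsc : LowerSemicontinuous g) (h0 : g 0 = 0) :
    MemJ0 fun x => ENNReal.ofReal (g x) := by
  refine ⟨ENNReal.continuous_ofReal.comp_lowerSemicontinuous hlsc
    fun _ _ => ENNReal.ofReal_le_ofReal, by simp [h0], fun a b t ht0 ht1 => ?_⟩
  have ht1' : 0 ≤ 1 - t := sub_nonneg.2 ht1
  calc ENNReal.ofReal (g (t * a + (1 - t) * b))
      ≤ ENNReal.ofReal (t * g a + (1 - t) * g b) :=
        ENNReal.ofReal_le_ofReal (hconv.2 trivial trivial ht0 ht1' (by ring))
    _ ≤ ENNReal.ofReal (t * g a) + ENNReal.ofReal ((1 - t) * g b) := ENNReal.ofReal_add_le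
    _ = _ := by rw [ENNReal.ofReal_mul ht0, ENNReal.ofReal_mul ht1']

lemma convexOn_abs_rpow {r : ℝ} (hr : 1 ≤ r) : ConvexOn ℝ Set.univ fun x : ℝ => |x| ^ r := by
  refine ⟨convex_univ, fun a _ b _ s t hs ht hst => ?_⟩
  calc |s • a + t • b| ^ r ≤ (s • |a| + t • |b|) ^ r := by
        gcongr
        simpa [abs_mul, abs_of_nonneg hs, abs_of_nonneg ht] using abs_add_le (s * a) (t * b)
    _ ≤ s • |a| ^ r + t • |b| ^ r :=
        (convexOn_rpow hr).2 (abs_nonneg a) (abs_nonneg b) hs ht hst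

lemma memJ0_enorm_rpow {r : ℝ} (hr : 1 ≤ r) : MemJ0 fun x : ℝ => ‖x‖ₑ ^ r := by
  have hlsc : LowerSemicontinuous fun x : ℝ => |x| ^ r :=
    (continuous_abs.rpow_const fun _ => Or.inr (zero_le_one.trans hr)).lowerSemicontinuous
  have h0 : |(0 : ℝ)| ^ r = 0 := by simp [(zero_lt_one.trans_le hr).ne']
  convert memJ0_ofReal_comp (convexOn_abs_rpow hr) hlsc h0 using 2 with x
  rw [Real.enorm_eq_ofReal_abs, ENNReal.ofReal_rpow_of_nonneg (abs_nonneg x) (by linarith)]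

lemma memJ0_indicator_compl_top {C : Set ℝ} (hconv : Convex ℝ C) (hclosed : IsClosed C)
    (h0 : (0 : ℝ) ∈ C) : MemJ0 (Cᶜ.indicator fun _ => ∞) := by
  refine ⟨hclosed.isOpen_compl.lowerSemicontinuous_indicator bot_le, by simp [h0],
    fun a b t ht0 ht1 => ?_⟩
  by_cases hmem : t * a + (1 - t) * b ∈ C
  · simp [hmem]
  obtain ⟨ht, ha⟩ | ⟨ht, hb⟩ : (0 < t ∧ a ∉ C) ∨ (t < 1 ∧ b ∉ C) := by
    by_contra! hc
    rcases ht0.eq_or_lt with rfl | ht0'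
    · simp_all
    rcases ht1.eq_or_lt with rfl | ht1'
    · simp_all
    exact hmem (hconv (hc.1 ht0') (hc.2 ht1') ht0 (sub_nonneg.2 ht1) (by ring))
  · simp [ha, ht]
  · simp [hb, ht]

lemma lintegral_indicator_compl_top_comp_eq_zero_iff {α : Type*} [MeasurableSpace α]
    {μ : Measure α} {C : Set ℝ} (hC : MeasurableSet C) {g : α → ℝ} (hg : AEMeasurable g μ) :
    ∫⁻ x, Cᶜ.indicator (fun _ => ∞) (g x) ∂μ = 0 ↔ ∀ᵐ x ∂μ, g x ∈ C := by
  have hm : AEMeasurable (fun x => Cᶜ.indicator (fun _ => ∞) (g x)) μ :=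
    (measurable_const.indicator hC.compl).comp_aemeasurable hg
  rw [lintegral_eq_zero_iff' hm]
  simp [EventuallyEq, Set.indicator_apply_eq_zero]

lemma memLp_two_of_memLp_one_of_memLp_top {α : Type*} [MeasurableSpace α] {μ : Measure α}
    {g : α → ℝ} (h1 : MemLp g 1 μ) (htop : MemLp g ⊤ μ) : MemLp g 2 μ :=
  (memLp_two_iff_integrable_sq h1.1).2 <| by
    simp only [sq]
    exact memLp_one_iff_integrable.1 (h1.mul (r := 1) htop)

def J0Dominated {α : Type*} [MeasurableSpace α] (μ : Measure α) (u f : α → ℝ) : Prop :=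
  ∀ j : ℝ → ℝ≥0∞, MemJ0 j → ∫⁻ x, j (u x) ∂μ ≤ ∫⁻ x, j (f x) ∂μ

namespace J0Dominated

variable {α : Type*} [MeasurableSpace α] {μ : Measure α} {u f : α → ℝ}

lemma eLpNorm_le (h : J0Dominated μ u f) {p : ℝ≥0∞} (hp : 1 ≤ p) (hp_top : p ≠ ⊤) :
    eLpNorm u p μ ≤ eLpNorm f p μ := by
  have hp0 : p ≠ 0 := (zero_lt_one.trans_le hp).ne'
  rw [eLpNorm_eq_lintegral_rpow_enorm_toReal hp0 hp_top,
    eLpNorm_eq_lintegral_rpow_enorm_toReal hp0 hp_top]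
  have hr : 1 ≤ p.toReal := by simpa using ENNReal.toReal_mono hp_top hp
  exact ENNReal.rpow_le_rpow (h _ (memJ0_enorm_rpow hr)) (by positivity)

lemma eLpNorm_top_le (h : J0Dominated μ u f) (hu : AEMeasurable u μ) :
    eLpNorm u ⊤ μ ≤ eLpNorm f ⊤ μ := by
  rcases eq_or_ne (eLpNorm f ⊤ μ) ⊤ with hf | hf
  · simp [hf]
  set C := Metric.closedBall (0 : ℝ) (eLpNorm f ⊤ μ).toReal
  have hC : MeasurableSet C := Metric.isClosed_closedBall.measurableSet
  have hjC : MemJ0 (Cᶜ.indicator fun _ => ∞) := memJ0_indicator_compl_top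
    (convex_closedBall 0 _) Metric.isClosed_closedBall
    (Metric.mem_closedBall_self ENNReal.toReal_nonneg)
  have hfC : ∀ᵐ x ∂μ, f x ∈ C := by
    filter_upwards [ae_le_eLpNormEssSup (f := f) (μ := μ)] with x hx
    rwa [← eLpNorm_exponent_top, ← ofReal_norm, ENNReal.ofReal_le_iff_le_toReal hf,
      ← mem_closedBall_zero_iff] at hx
  have huC : ∀ᵐ x ∂μ, u x ∈ C := by
    rw [← lintegral_indicator_compl_top_comp_eq_zero_iff hC hu]
    refine le_antisymm ((h _ hjC).trans_eq ?_) bot_le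
    exact (lintegral_congr_ae (hfC.mono fun x hx => by simp [hx])).trans lintegral_zero
  calc eLpNorm u ⊤ μ ≤ ENNReal.ofReal (eLpNorm f ⊤ μ).toReal :=
        eLpNormEssSup_le_of_ae_bound (huC.mono fun x hx => mem_closedBall_zero_iff.1 hx)
    _ = eLpNorm f ⊤ μ := ENNReal.ofReal_toReal hf

end J0Dominated

theorem norms_le_of_J0_le_general
    {Ω : Type*} [MeasurableSpace Ω] (μ : Measure Ω)
    (f u : Ω → ℝ)
    (hf1 : MemLp f 1 μ) (hfinf : MemLp f ⊤ μ)
    (hu : Measurable u)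
    (h : ∀ j : ℝ → ℝ≥0∞, MemJ0 j → ∫⁻ x, j (u x) ∂μ ≤ ∫⁻ x, j (f x) ∂μ) :
    eLpNorm u ⊤ μ ≤ eLpNorm f ⊤ μ ∧
    (∀ p : ℝ≥0∞, 1 ≤ p → p ≠ ⊤ → eLpNorm u p μ ≤ eLpNorm f p μ) ∧
    MemLp u 1 μ ∧ MemLp u ⊤ μ ∧ MemLp u 2 μ := by
  have hdom : J0Dominated μ u f := h
  have htop := hdom.eLpNorm_top_le hu.aemeasurable
  have hu1 : MemLp u 1 μ :=
    ⟨hu.aestronglyMeasurable, (hdom.eLpNorm_le le_rfl ENNReal.one_ne_top).trans_lt hf1.2⟩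
  have hutop : MemLp u ⊤ μ := ⟨hu.aestronglyMeasurable, htop.trans_lt hfinf.2⟩
  exact ⟨htop, fun p hp hp_top => hdom.eLpNorm_le hp hp_top, hu1, hutop,
    memLp_two_of_memLp_one_of_memLp_top hu1 hutop⟩

/-- If `f ∈ L¹ ∩ L^∞` and a measurable `u` satisfies
`∫ j(u) dμ ≤ ∫ j(f) dμ` for every `j ∈ J₀`, then `‖u‖_∞ ≤ ‖f‖_∞` and
`‖u‖_p ≤ ‖f‖_p` for every `p ∈ [1, ∞)`; in particular `u ∈ L¹ ∩ L^∞ ⊆ L²`. -/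
theorem norms_le_of_J0_le
    {Ω : Type*} [MeasurableSpace Ω] (μ : Measure Ω) [SigmaFinite μ]
    (f u : Ω → ℝ)
    (hf1 : MemLp f 1 μ) (hfinf : MemLp f ⊤ μ)
    (hu : Measurable u)
    (h : ∀ j : ℝ → ℝ≥0∞, MemJ0 j → ∫⁻ x, j (u x) ∂μ ≤ ∫⁻ x, j (f x) ∂μ) :
    eLpNorm u ⊤ μ ≤ eLpNorm f ⊤ μ ∧
    (∀ p : ℝ≥0∞, 1 ≤ p → p ≠ ⊤ → eLpNorm u p μ ≤ eLpNorm f p μ) ∧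
    MemLp u 1 μ ∧ MemLp u ⊤ μ ∧ MemLp u 2 μ :=
  norms_le_of_J0_le_general μ f u hf1 hfinf hu h
end

section
/- Let φ : ℝ → ℝ be continuous and strictly increasing, let b ∈ ℝ, and let (a_n) be a bounded sequence of real numbers such that (a_n − b)(φ(a_n) − φ(b)) → 0 as n → ∞. Then a_n → b. -/
open Filter Topology

/-! Off an `ε`-neighbourhood of `b` the product `(x - b) (φ x - φ b)` is bounded below by
`ε · min (φ (b + ε) - φ b) (φ b - φ (b - ε)) > 0`; so once the product is small, `x` is
`ε`-close to `b`. -/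

section

variable {𝕜 : Type*} [Field 𝕜] [LinearOrder 𝕜] [IsStrictOrderedRing 𝕜] {φ : 𝕜 → 𝕜}

theorem StrictMono.exists_pos_le_mul_sub_of_le_abs_sub (hφ : StrictMono φ) (b : 𝕜) {ε : 𝕜}
    (hε : 0 < ε) : ∃ δ > 0, ∀ x, ε ≤ |x - b| → δ ≤ (x - b) * (φ x - φ b) := by
  set m := min (φ (b + ε) - φ b) (φ b - φ (b - ε))
  have hm : 0 < m := lt_min (sub_pos.2 (hφ (by linarith))) (sub_pos.2 (hφ (by linarith)))
  refine ⟨ε * m, mul_pos hε hm, fun x hx => ?_⟩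
  rcases le_abs'.1 hx with hlt | hgt
  · have hφx : m ≤ φ b - φ x :=
      (min_le_right _ _).trans (sub_le_sub_left (hφ.monotone (by linarith)) _)
    nlinarith
  · have hφx : m ≤ φ x - φ b :=
      (min_le_left _ _).trans (sub_le_sub_right (hφ.monotone (by linarith)) _)
    nlinarith

end

theorem StrictMono.tendsto_of_tendsto_mul_sub {ι : Type*} {l : Filter ι} {φ : ℝ → ℝ}
    (hφ : StrictMono φ) {b : ℝ} {a : ι → ℝ}
    (h : Tendsto (fun i => (a i - b) * (φ (a i) - φ b)) l (𝓝 0)) : Tendsto a l (𝓝 b) := by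
  refine Metric.tendsto_nhds.2 fun ε hε => ?_
  obtain ⟨δ, hδ, hδle⟩ := hφ.exists_pos_le_mul_sub_of_le_abs_sub b hε
  filter_upwards [Metric.tendsto_nhds.1 h δ hδ] with i hi
  rw [Real.dist_eq, sub_zero] at hi
  rw [Real.dist_eq]
  by_contra! hfar
  exact (hδle _ hfar).not_gt ((le_abs_self _).trans_lt hi)

theorem tendsto_of_mul_phi_tendsto_zero_general
    (φ : ℝ → ℝ) (hφm : StrictMono φ)
    (b : ℝ) (a : ℕ → ℝ)
    (h : Tendsto (fun n => (a n - b) * (φ (a n) - φ b)) atTop (𝓝 0)) :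
    Tendsto a atTop (𝓝 b) :=
  hφm.tendsto_of_tendsto_mul_sub h

/-- Let `φ : ℝ → ℝ` be continuous and strictly increasing, `b ∈ ℝ`, and let
`(a_n)` be a bounded real sequence with `(a_n − b) (φ(a_n) − φ(b)) → 0`.
Then `a_n → b`. -/
theorem tendsto_of_mul_phi_tendsto_zero
    (φ : ℝ → ℝ) (hφc : Continuous φ) (hφm : StrictMono φ)
    (b : ℝ) (a : ℕ → ℝ) (hbdd : ∃ C : ℝ, ∀ n : ℕ, |a n| ≤ C)
    (h : Tendsto (fun n => (a n - b) * (φ (a n) - φ b)) atTop (𝓝 0)) :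
    Tendsto a atTop (𝓝 b) :=
  tendsto_of_mul_phi_tendsto_zero_general φ hφm b a h
end

section
/- Let (Σ, 𝔅, μ) be a σ-finite measure space, φ : ℝ → ℝ continuous and strictly increasing, C > 0, and let f and u_n (n ∈ ℕ) be measurable real-valued functions on Σ with |f| ≤ C and |u_n| ≤ C μ-a.e. for all n. If the functions g_n := (f − u_n)(φ∘f − φ∘u_n) converge to 0 in L¹(Σ, μ) as n → ∞, then u_n → f in measure, i.e. for every δ > 0, μ({x ∈ Σ : |u_n(x) − f(x)| > δ}) → 0 as n → ∞. -/
/-!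
On the square `[-C, C]²`, the function `(s, t) ↦ (s - t) (φ s - φ t)` is bounded below by some
`c > 0` off the strip `|s - t| < δ`, so `{δ < |uₙ - f|}` lies a.e. inside `{c ≤ |gₙ|}`, whose measure
tends to zero because `L¹` convergence implies convergence in measure. The constant `c` exists for
any strictly increasing `φ`: comparing with a grid of mesh `δ / 2` bounds `φ (t + δ) - φ t` from
below, uniformly in `t ∈ [a, b]`, by the least of finitely many positive increments.
-/

open MeasureTheory Filter Topology
open scoped ENNReal

namespace StrictMono

variable {φ : ℝ → ℝ}

theorem exists_pos_le_sub_add (hφ : StrictMono φ) (a b : ℝ) {δ : ℝ} (hδ : 0 < δ) :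
    ∃ c > 0, ∀ t ∈ Set.Icc a b, c ≤ φ (t + δ) - φ t := by
  set h := δ / 2 with hh
  have hh₀ : 0 < h := half_pos hδ
  set p : ℕ → ℝ := fun i => a + i * h
  obtain ⟨i₀, -, hi₀⟩ := (Finset.range (⌈(b - a) / h⌉₊ + 1)).exists_min_image
    (fun i => φ (p i + h) - φ (p i)) ⟨0, by simp⟩
  refine ⟨φ (p i₀ + h) - φ (p i₀), sub_pos.2 (hφ (lt_add_of_pos_right _ hh₀)), ?_⟩
  rintro t ⟨hat, htb⟩
  set i := ⌈(t - a) / h⌉₊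
  have hiN : i ∈ Finset.range (⌈(b - a) / h⌉₊ + 1) :=
    Finset.mem_range_succ_iff.2 (Nat.ceil_mono (by gcongr))
  have ht_le : t ≤ p i := by
    have := (div_le_iff₀ hh₀).1 (Nat.le_ceil ((t - a) / h))
    simp only [p]; linarith
  have hp_lt : p i < t + h := by
    have := mul_lt_mul_of_pos_right
      (Nat.ceil_lt_add_one (div_nonneg (sub_nonneg.2 hat) hh₀.le)) hh₀
    rw [add_mul, div_mul_cancel₀ _ hh₀.ne'] at this
    simp only [p]; linarith
  calc φ (p i₀ + h) - φ (p i₀) ≤ φ (p i + h) - φ (p i) := hi₀ i hiN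
    _ ≤ φ (t + δ) - φ t := sub_le_sub
        (hφ.monotone (by linarith)) (hφ.monotone ht_le)

theorem exists_pos_le_mul_sub (hφ : StrictMono φ) (a b : ℝ) {δ : ℝ} (hδ : 0 < δ) :
    ∃ c > 0, ∀ s ∈ Set.Icc a b, ∀ t ∈ Set.Icc a b,
      δ ≤ |s - t| → c ≤ (s - t) * (φ s - φ t) := by
  obtain ⟨c, hc, hgap⟩ := hφ.exists_pos_le_sub_add a b hδ
  have key : ∀ s, ∀ t ∈ Set.Icc a b, δ ≤ s - t → δ * c ≤ (s - t) * (φ s - φ t) :=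
    fun s t ht hst => mul_le_mul hst
      ((hgap t ht).trans (sub_le_sub_right (hφ.monotone (by linarith)) _)) hc.le (by linarith)
  refine ⟨δ * c, mul_pos hδ hc, fun s hs t ht hst => ?_⟩
  rcases le_abs'.1 hst with h | h
  · calc δ * c ≤ (t - s) * (φ t - φ s) := key t s hs (by linarith)
      _ = (s - t) * (φ s - φ t) := by ring
  · exact key s t ht h

end StrictMono

theorem tendstoInMeasure_of_gn_tendsto_zero_general
    {Ω : Type*} [MeasurableSpace Ω] (μ : Measure Ω)
    (φ : ℝ → ℝ) (hφm : StrictMono φ)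
    (C : ℝ)
    (f : Ω → ℝ) (u : ℕ → Ω → ℝ)
    (hf : Measurable f) (hu : ∀ n : ℕ, Measurable (u n))
    (hfC : ∀ᵐ x ∂μ, |f x| ≤ C) (huC : ∀ n : ℕ, ∀ᵐ x ∂μ, |u n x| ≤ C)
    (hg : Tendsto
      (fun n => eLpNorm (fun x => (f x - u n x) * (φ (f x) - φ (u n x))) 1 μ)
      atTop (𝓝 0)) :
    ∀ δ : ℝ, 0 < δ →
      Tendsto (fun n => μ {x | δ < |u n x - f x|}) atTop (𝓝 0) := by
  intro δ hδ
  set g : ℕ → Ω → ℝ := fun n x => (f x - u n x) * (φ (f x) - φ (u n x))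
  have hφ : Measurable φ := hφm.monotone.measurable
  have hg_meas : ∀ n, AEStronglyMeasurable (g n) μ := fun n =>
    ((hf.sub (hu n)).mul ((hφ.comp hf).sub (hφ.comp (hu n)))).aestronglyMeasurable
  have hg_in_measure : TendstoInMeasure μ g atTop 0 :=
    tendstoInMeasure_of_tendsto_eLpNorm one_ne_zero hg_meas aestronglyMeasurable_zero
      (by simpa only [sub_zero] using hg)
  obtain ⟨c, hc, hc_le⟩ := hφm.exists_pos_le_mul_sub (-C) C hδ
  refine tendsto_of_tendsto_of_tendsto_of_le_of_le tendsto_const_nhds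
    (hg_in_measure (ENNReal.ofReal c) (ENNReal.ofReal_pos.2 hc)) (fun _ => zero_le)
    (fun n => measure_mono_ae ?_)
  filter_upwards [hfC, huC n] with x hfx hux hx
  have hgx : c ≤ g n x :=
    hc_le _ (abs_le.1 hfx) _ (abs_le.1 hux) (by rw [abs_sub_comm]; exact hx.le)
  show ENNReal.ofReal c ≤ edist (g n x) 0
  rw [edist_zero_right, ← ofReal_norm, Real.norm_eq_abs]
  exact ENNReal.ofReal_le_ofReal (hgx.trans (le_abs_self _))

/-- Let `(Ω, 𝔅, μ)` be a σ-finite measure space, `φ : ℝ → ℝ` continuous and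
strictly increasing, `C > 0`, and let `f` and `u_n` be measurable real
functions with `|f| ≤ C` and `|u_n| ≤ C` μ-a.e. If
`g_n := (f − u_n)(φ∘f − φ∘u_n) → 0` in `L¹`, then `u_n → f` in measure:
for every `δ > 0`, `μ {x : |u_n x − f x| > δ} → 0`. -/
theorem tendstoInMeasure_of_gn_tendsto_zero
    {Ω : Type*} [MeasurableSpace Ω] (μ : Measure Ω) [SigmaFinite μ]
    (φ : ℝ → ℝ) (hφc : Continuous φ) (hφm : StrictMono φ)
    (C : ℝ) (hC : 0 < C)
    (f : Ω → ℝ) (u : ℕ → Ω → ℝ)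
    (hf : Measurable f) (hu : ∀ n : ℕ, Measurable (u n))
    (hfC : ∀ᵐ x ∂μ, |f x| ≤ C) (huC : ∀ n : ℕ, ∀ᵐ x ∂μ, |u n x| ≤ C)
    (hg : Tendsto
      (fun n => eLpNorm (fun x => (f x - u n x) * (φ (f x) - φ (u n x))) 1 μ)
      atTop (𝓝 0)) :
    ∀ δ : ℝ, 0 < δ →
      Tendsto (fun n => μ {x | δ < |u n x - f x|}) atTop (𝓝 0) :=
  tendstoInMeasure_of_gn_tendsto_zero_general μ φ hφm C f u hf hu hfC huC hg
end

section
/- Let (Σ, 𝔅, μ) be a σ-finite measure space, f ∈ L¹(Σ, μ) ∩ L^∞(Σ, μ), and let (u_n) be a sequence of measurable functions with u_n ≥ 0 μ-a.e. for all n, u_n → f μ-a.e. as n → ∞, and ∫_Σ j(u_n) dμ ≤ ∫_Σ j(f) dμ for every j ∈ J₀ and every n. Then u_n → f in L¹(Σ, μ). -/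
open MeasureTheory Filter Topology
open scoped ENNReal

/-! Taking `j = ENNReal.ofReal` gives `∫ u_n ≤ ∫ f`, and since
`|u_n - f| + f = u_n + 2 (f - u_n)⁺` this leaves `‖u_n - f‖₁ ≤ 2 ∫ (f - u_n)⁺`. As `u_n ≥ 0`, the
functions `(f - u_n)⁺` are dominated by `f` and tend to `0` a.e., so dominated convergence
finishes the proof (Scheffé's lemma). -/

theorem memJ0_ofReal : MemJ0 ENNReal.ofReal := by
  refine ⟨ENNReal.continuous_ofReal.lowerSemicontinuous, ENNReal.ofReal_zero, ?_⟩
  intro a b t ht ht1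
  calc ENNReal.ofReal (t * a + (1 - t) * b)
      ≤ ENNReal.ofReal (t * a) + ENNReal.ofReal ((1 - t) * b) := ENNReal.ofReal_add_le
    _ = ENNReal.ofReal t * ENNReal.ofReal a + ENNReal.ofReal (1 - t) * ENNReal.ofReal b := by
        rw [ENNReal.ofReal_mul ht, ENNReal.ofReal_mul (by linarith)]

theorem ENNReal.ofReal_abs_sub_add_ofReal {u f : ℝ} (hu : 0 ≤ u) (hf : 0 ≤ f) :
    ENNReal.ofReal |u - f| + ENNReal.ofReal f
      = ENNReal.ofReal u + 2 * ENNReal.ofReal (f - u) := by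
  rcases le_total u f with huf | hfu
  · rw [abs_sub_comm, abs_of_nonneg (sub_nonneg.2 huf), two_mul,
      ← ENNReal.ofReal_add (sub_nonneg.2 huf) hf, ← ENNReal.ofReal_add (sub_nonneg.2 huf)
        (sub_nonneg.2 huf), ← ENNReal.ofReal_add hu (by linarith)]
    ring_nf
  · rw [abs_of_nonneg (sub_nonneg.2 hfu), ENNReal.ofReal_of_nonpos (sub_nonpos.2 hfu), mul_zero,
      add_zero, ← ENNReal.ofReal_add (sub_nonneg.2 hfu) hf, sub_add_cancel]

section Scheffe

variable {α : Type*} [MeasurableSpace α] {μ : Measure α}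

theorem tendsto_lintegral_ofReal_sub_of_nonneg {f : α → ℝ} {u : ℕ → α → ℝ}
    (hf : ∫⁻ x, ENNReal.ofReal (f x) ∂μ ≠ ∞) (hfm : AEMeasurable f μ)
    (hum : ∀ n, AEMeasurable (u n) μ) (hpos : ∀ n, ∀ᵐ x ∂μ, 0 ≤ u n x)
    (hae : ∀ᵐ x ∂μ, Tendsto (fun n => u n x) atTop (𝓝 (f x))) :
    Tendsto (fun n => ∫⁻ x, ENNReal.ofReal (f x - u n x) ∂μ) atTop (𝓝 0) := by
  have hlim : ∀ᵐ x ∂μ, Tendsto (fun n => ENNReal.ofReal (f x - u n x)) atTop (𝓝 0) := by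
    filter_upwards [hae] with x hx
    have hsub : Tendsto (fun n => f x - u n x) atTop (𝓝 (f x - f x)) := tendsto_const_nhds.sub hx
    have := (ENNReal.continuous_ofReal.tendsto _).comp hsub
    rwa [sub_self, ENNReal.ofReal_zero] at this
  have hbound : ∀ n, ∀ᵐ x ∂μ, ENNReal.ofReal (f x - u n x) ≤ ENNReal.ofReal (f x) := fun n => by
    filter_upwards [hpos n] with x hx
    exact ENNReal.ofReal_le_ofReal (by linarith)
  simpa using tendsto_lintegral_of_dominated_convergence' _
    (fun n => (hfm.sub (hum n)).ennreal_ofReal) hbound hf hlim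

theorem lintegral_ofReal_abs_sub_le {f u : α → ℝ} (hfm : AEMeasurable f μ)
    (hum : AEMeasurable u μ)
    (hu : ∀ᵐ x ∂μ, 0 ≤ u x) (hf : ∀ᵐ x ∂μ, 0 ≤ f x)
    (hle : ∫⁻ x, ENNReal.ofReal (u x) ∂μ ≤ ∫⁻ x, ENNReal.ofReal (f x) ∂μ)
    (hfin : ∫⁻ x, ENNReal.ofReal (f x) ∂μ ≠ ∞) :
    ∫⁻ x, ENNReal.ofReal |u x - f x| ∂μ ≤ 2 * ∫⁻ x, ENNReal.ofReal (f x - u x) ∂μ := by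
  have hsplit : ∫⁻ x, ENNReal.ofReal |u x - f x| ∂μ + ∫⁻ x, ENNReal.ofReal (f x) ∂μ
      = ∫⁻ x, ENNReal.ofReal (u x) ∂μ + 2 * ∫⁻ x, ENNReal.ofReal (f x - u x) ∂μ := by
    rw [← lintegral_const_mul' _ _ ENNReal.ofNat_ne_top, ← lintegral_add_left' hum.ennreal_ofReal,
      ← lintegral_add_right' _ hfm.ennreal_ofReal]
    refine lintegral_congr_ae ?_
    filter_upwards [hu, hf] with x hux hfx
    exact ENNReal.ofReal_abs_sub_add_ofReal hux hfx
  refine (ENNReal.add_le_add_iff_right hfin).1 ?_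
  calc _ = ∫⁻ x, ENNReal.ofReal (u x) ∂μ + 2 * ∫⁻ x, ENNReal.ofReal (f x - u x) ∂μ := hsplit
    _ ≤ ∫⁻ x, ENNReal.ofReal (f x) ∂μ + 2 * ∫⁻ x, ENNReal.ofReal (f x - u x) ∂μ := by gcongr
    _ = _ := add_comm _ _

theorem tendsto_eLpNorm_one_sub_of_lintegral_ofReal_le {f : α → ℝ} {u : ℕ → α → ℝ}
    (hf : Integrable f μ) (hum : ∀ n, AEMeasurable (u n) μ) (hpos : ∀ n, ∀ᵐ x ∂μ, 0 ≤ u n x)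
    (hae : ∀ᵐ x ∂μ, Tendsto (fun n => u n x) atTop (𝓝 (f x)))
    (hle : ∀ n, ∫⁻ x, ENNReal.ofReal (u n x) ∂μ ≤ ∫⁻ x, ENNReal.ofReal (f x) ∂μ) :
    Tendsto (fun n => eLpNorm (fun x => u n x - f x) 1 μ) atTop (𝓝 0) := by
  have hfm : AEMeasurable f μ := hf.aemeasurable
  have hfin : ∫⁻ x, ENNReal.ofReal (f x) ∂μ ≠ ∞ :=
    ((lintegral_ofReal_le_lintegral_enorm f).trans_lt hf.2).ne
  have hf0 : ∀ᵐ x ∂μ, 0 ≤ f x := by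
    filter_upwards [ae_all_iff.2 hpos, hae] with x hux hx
    exact ge_of_tendsto' hx hux
  have hbound : Tendsto (fun n => 2 * ∫⁻ x, ENNReal.ofReal (f x - u n x) ∂μ) atTop (𝓝 0) := by
    simpa using ENNReal.Tendsto.const_mul
      (tendsto_lintegral_ofReal_sub_of_nonneg hfin hfm hum hpos hae) (Or.inr ENNReal.ofNat_ne_top)
  refine tendsto_of_tendsto_of_tendsto_of_le_of_le tendsto_const_nhds hbound (fun _ => zero_le)
    fun n => ?_
  simp only [eLpNorm_one_eq_lintegral_enorm, Real.enorm_eq_ofReal_abs]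
  exact lintegral_ofReal_abs_sub_le hfm (hum n) (hpos n) hf0 (hle n) hfin

end Scheffe

theorem tendsto_L1_of_J0_le_general
    {Ω : Type*} [MeasurableSpace Ω] (μ : Measure Ω)
    (f : Ω → ℝ) (hf1 : MemLp f 1 μ)
    (u : ℕ → Ω → ℝ) (hu : ∀ n : ℕ, Measurable (u n))
    (hpos : ∀ n : ℕ, ∀ᵐ x ∂μ, 0 ≤ u n x)
    (hae : ∀ᵐ x ∂μ, Tendsto (fun n => u n x) atTop (𝓝 (f x)))
    (hj : ∀ n : ℕ, ∀ j : ℝ → ℝ≥0∞, MemJ0 j →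
      ∫⁻ x, j (u n x) ∂μ ≤ ∫⁻ x, j (f x) ∂μ) :
    Tendsto (fun n => eLpNorm (fun x => u n x - f x) 1 μ) atTop (𝓝 0) :=
  tendsto_eLpNorm_one_sub_of_lintegral_ofReal_le (memLp_one_iff_integrable.1 hf1)
    (fun n => (hu n).aemeasurable) hpos hae fun n => hj n _ memJ0_ofReal

/-- Let `(Ω, 𝔅, μ)` be a σ-finite measure space, `f ∈ L¹ ∩ L^∞`, and `(u_n)`
a sequence of measurable functions with `u_n ≥ 0` μ-a.e., `u_n → f` μ-a.e.,
and `∫ j(u_n) dμ ≤ ∫ j(f) dμ` for every `j ∈ J₀` and every `n`. Then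
`u_n → f` in `L¹`. -/
theorem tendsto_L1_of_J0_le
    {Ω : Type*} [MeasurableSpace Ω] (μ : Measure Ω) [SigmaFinite μ]
    (f : Ω → ℝ) (hf1 : MemLp f 1 μ) (hfinf : MemLp f ⊤ μ)
    (u : ℕ → Ω → ℝ) (hu : ∀ n : ℕ, Measurable (u n))
    (hpos : ∀ n : ℕ, ∀ᵐ x ∂μ, 0 ≤ u n x)
    (hae : ∀ᵐ x ∂μ, Tendsto (fun n => u n x) atTop (𝓝 (f x)))
    (hj : ∀ n : ℕ, ∀ j : ℝ → ℝ≥0∞, MemJ0 j →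
      ∫⁻ x, j (u n x) ∂μ ≤ ∫⁻ x, j (f x) ∂μ) :
    Tendsto (fun n => eLpNorm (fun x => u n x - f x) 1 μ) atTop (𝓝 0) :=
  tendsto_L1_of_J0_le_general μ f hf1 u hu hpos hae hj
end
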